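/- Let Q, X, S be finite-valued random variables such that X and S are conditionally independent given Q, let g be a function on the alphabet of X, and let Y = f(g(X), S) where f is one-to-one in each argument. Then I(X;Y|Q) = H(Y|Q) − H(S|Q). -/
import Mathlib


open scoped Classical
open Finset

/-- A probability mass function on a finite sample space, given as a real-valued
weight function that is nonnegative and sums to one. -/
structure FinPMF (Ω : Type) where
  [fin : Fintype Ω]
  p : Ω → ℝ
  nonneg : ∀ ω, 0 ≤ p ω
  sum_one : ∑ ω, p ω = 1

/-- Probability of an event. -/
noncomputable def prE {Ω : Type} (μ : FinPMF Ω) (E : Ω → Prop) : ℝ :=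
  letI := μ.fin
  ∑ ω, if E ω then μ.p ω else 0

/-- Probability that the random variable `X` takes the value `x`. -/
noncomputable def prX {Ω α : Type} (μ : FinPMF Ω) (X : Ω → α) (x : α) : ℝ :=
  prE μ (fun ω => X ω = x)

/-- Shannon entropy (base 2) of a random variable on a finite probability space. -/
noncomputable def entH {Ω α : Type} (μ : FinPMF Ω) (X : Ω → α) : ℝ :=
  letI := μ.fin;
  -∑ x ∈ Finset.univ.image X, prX μ X x * Real.logb 2 (prX μ X x)

/-- Conditional entropy `H(X | Y)` (base 2). -/
noncomputable def condH {Ω α β : Type} (μ : FinPMF Ω) (X : Ω → α) (Y : Ω → β) : ℝ :=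
  entH μ (fun ω => (X ω, Y ω)) - entH μ Y

/-- Conditional mutual information `I(X ; Y | Q)` (base 2). -/
noncomputable def condMI {Ω α β γ : Type} (μ : FinPMF Ω) (X : Ω → α) (Y : Ω → β)
    (Q : Ω → γ) : ℝ :=
  condH μ X Q + condH μ Y Q - condH μ (fun ω => (X ω, Y ω)) Q

/-- A two-argument function is one-to-one in each argument. -/
def OneToOne {A B C : Type} (f : A → B → C) : Prop :=
  (∀ b, Function.Injective fun a => f a b) ∧ ∀ a, Function.Injective (f a)

/-- Conditional pmf `p_{X|U}(x|u)`. -/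
noncomputable def condP {Ω α γ : Type} (μ : FinPMF Ω) (X : Ω → α) (U : Ω → γ)
    (x : α) (u : γ) : ℝ :=
  prE μ (fun ω => X ω = x ∧ U ω = u) / prX μ U u

/-- Independence of two random variables. -/
def IndepFun {Ω α β : Type} (μ : FinPMF Ω) (X : Ω → α) (S : Ω → β) : Prop :=
  ∀ x s, prE μ (fun ω => X ω = x ∧ S ω = s) = prX μ X x * prX μ S s

/-- Conditional independence of `A` and `B` given `Z`:
for every `z` with `P(Z = z) > 0`, `P(A = a, B = b | Z = z) = P(A = a | Z = z) P(B = b | Z = z)`. -/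
def CondIndepFun {Ω α β γ : Type} (μ : FinPMF Ω) (A : Ω → α) (B : Ω → β) (Z : Ω → γ) : Prop :=
  ∀ a b z, 0 < prX μ Z z →
    prE μ (fun ω => A ω = a ∧ B ω = b ∧ Z ω = z) / prX μ Z z =
      (prE μ (fun ω => A ω = a ∧ Z ω = z) / prX μ Z z) *
        (prE μ (fun ω => B ω = b ∧ Z ω = z) / prX μ Z z)

/-- Mutual conditional independence of `X₁, X₂, X₃` given `Q`: the joint conditional pmf
factors into the product of the conditional marginals. -/
def CondIndepFun3 {Ω α₁ α₂ α₃ γ : Type} (μ : FinPMF Ω)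
    (X₁ : Ω → α₁) (X₂ : Ω → α₂) (X₃ : Ω → α₃) (Q : Ω → γ) : Prop :=
  ∀ x₁ x₂ x₃ q, 0 < prX μ Q q →
    prE μ (fun ω => X₁ ω = x₁ ∧ X₂ ω = x₂ ∧ X₃ ω = x₃ ∧ Q ω = q) / prX μ Q q =
      (prE μ (fun ω => X₁ ω = x₁ ∧ Q ω = q) / prX μ Q q) *
        (prE μ (fun ω => X₂ ω = x₂ ∧ Q ω = q) / prX μ Q q) *
        (prE μ (fun ω => X₃ ω = x₃ ∧ Q ω = q) / prX μ Q q)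

/-- The ε-typical set (sequences whose empirical pmf is within a relative ε of `p`). -/
def Typical {𝒳 : Type} [Fintype 𝒳] (p : 𝒳 → ℝ) (ε : ℝ) (n : ℕ) (xs : Fin n → 𝒳) : Prop :=
  ∀ x : 𝒳, |((Finset.univ.filter fun i => xs i = x).card : ℝ) / n - p x| ≤ ε * p x

/-- The number of codewords `⌈2^{nR}⌉` at rate `R` and blocklength `n`. -/
noncomputable def codeSize (R : ℝ) (n : ℕ) : ℕ := ⌈(2 : ℝ) ^ ((n : ℝ) * R)⌉₊

section Helpers

variable {Ω : Type} (μ : FinPMF Ω)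

lemma prE_nonneg (E : Ω → Prop) : 0 ≤ prE μ E := by
  unfold prE
  apply Finset.sum_nonneg
  intro ω _
  split
  · exact μ.nonneg ω
  · exact le_rfl

lemma prE_mono {E F : Ω → Prop} (h : ∀ ω, E ω → F ω) : prE μ E ≤ prE μ F := by
  unfold prE
  apply Finset.sum_le_sum
  intro ω _
  split_ifs with h1 h2
  · exact le_rfl
  · exact absurd (h ω h1) h2
  · exact μ.nonneg ω
  · exact le_rfl

lemma prE_congr {E F : Ω → Prop} (h : ∀ ω, E ω ↔ F ω) : prE μ E = prE μ F := by
  unfold prE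
  exact Finset.sum_congr rfl fun ω _ => by simp only [h ω]

lemma entH_comp {α β : Type} (Z : Ω → α) (φ : α → β) (hφ : Function.Injective φ) :
    entH μ (fun ω => φ (Z ω)) = entH μ Z := by
  letI := μ.fin
  unfold entH
  congr 1
  have himg : (Finset.univ.image fun ω => φ (Z ω)) = (Finset.univ.image Z).image φ := by
    rw [Finset.image_image]
    rfl
  rw [himg, Finset.sum_image (fun a _ b _ h => hφ h)]
  refine Finset.sum_congr rfl fun z _ => ?_
  have : prX μ (fun ω => φ (Z ω)) (φ z) = prX μ Z z :=
    prE_congr μ fun ω => ⟨fun h => hφ h, fun h => congrArg φ h⟩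
  rw [this]

lemma entH_fintype {α : Type} [Fintype α] (Z : Ω → α) :
    entH μ Z = -∑ x : α, prX μ Z x * Real.logb 2 (prX μ Z x) := by
  unfold entH
  congr 1
  apply Finset.sum_subset (Finset.subset_univ _)
  intro x _ hx
  have h0 : prX μ Z x = 0 := by
    unfold prX prE
    apply Finset.sum_eq_zero
    intro ω _
    rw [if_neg]
    intro h
    letI := μ.fin
    exact hx (Finset.mem_image.mpr ⟨ω, Finset.mem_univ ω, h⟩)
  simp [h0]

lemma prE_fiber {β : Type} [Fintype β] (S : Ω → β) (E : Ω → Prop) :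
    ∑ s : β, prE μ (fun ω => E ω ∧ S ω = s) = prE μ E := by
  unfold prE
  rw [Finset.sum_comm]
  refine Finset.sum_congr rfl fun ω _ => ?_
  by_cases h : E ω <;> simp [h]

end Helpers

lemma entH_add_of_condIndep {Ω α β γ : Type} [Fintype α] [Fintype β] [Fintype γ]
    (μ : FinPMF Ω) (X : Ω → α) (S : Ω → β) (Q : Ω → γ)
    (h : CondIndepFun μ X S Q) :
    entH μ (fun ω => (X ω, S ω, Q ω)) + entH μ Q
      = entH μ (fun ω => (X ω, Q ω)) + entH μ (fun ω => (S ω, Q ω)) := by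
  classical
  -- abbreviations (plain functions, definitionally transparent)
  let p3 : α → β → γ → ℝ := fun x s q => prE μ (fun ω => X ω = x ∧ S ω = s ∧ Q ω = q)
  let pXQ : α → γ → ℝ := fun x q => prE μ (fun ω => X ω = x ∧ Q ω = q)
  let pSQ : β → γ → ℝ := fun s q => prE μ (fun ω => S ω = s ∧ Q ω = q)
  let pQ : γ → ℝ := fun q => prE μ (fun ω => Q ω = q)
  -- marginalization
  have mXQ : ∀ x q, pXQ x q = ∑ s, p3 x s q := by
    intro x q
    rw [show pXQ x q = prE μ (fun ω => X ω = x ∧ Q ω = q) from rfl,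
      ← prE_fiber μ S (fun ω => X ω = x ∧ Q ω = q)]
    exact Finset.sum_congr rfl fun s _ => prE_congr μ (fun ω => by tauto)
  have mSQ : ∀ s q, pSQ s q = ∑ x, p3 x s q := by
    intro s q
    rw [show pSQ s q = prE μ (fun ω => S ω = s ∧ Q ω = q) from rfl,
      ← prE_fiber μ X (fun ω => S ω = s ∧ Q ω = q)]
    exact Finset.sum_congr rfl fun x _ => prE_congr μ (fun ω => by tauto)
  have mQ : ∀ q, pQ q = ∑ x, ∑ s, p3 x s q := by
    intro q
    rw [show pQ q = prE μ (fun ω => Q ω = q) from rfl,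
      ← prE_fiber μ X (fun ω => Q ω = q)]
    refine Finset.sum_congr rfl fun x _ => ?_
    rw [← prE_fiber μ S (fun ω => Q ω = q ∧ X ω = x)]
    exact Finset.sum_congr rfl fun s _ => prE_congr μ (fun ω => by tauto)
  -- identify prX's with abbreviations
  have e3 : ∀ x s q, prX μ (fun ω => (X ω, S ω, Q ω)) (x, s, q) = p3 x s q :=
    fun x s q => prE_congr μ fun ω => by simp [Prod.ext_iff]
  have eXQ : ∀ x q, prX μ (fun ω => (X ω, Q ω)) (x, q) = pXQ x q :=
    fun x q => prE_congr μ fun ω => by simp [Prod.ext_iff]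
  have eSQ : ∀ s q, prX μ (fun ω => (S ω, Q ω)) (s, q) = pSQ s q :=
    fun s q => prE_congr μ fun ω => by simp [Prod.ext_iff]
  have eQ : ∀ q, prX μ Q q = pQ q := fun q => rfl
  -- entropies as triple sums
  have hA : entH μ (fun ω => (X ω, S ω, Q ω)) =
      -∑ x, ∑ s, ∑ q, p3 x s q * Real.logb 2 (p3 x s q) := by
    rw [entH_fintype]
    congr 1
    rw [Fintype.sum_prod_type]
    refine Finset.sum_congr rfl fun x _ => ?_
    rw [Fintype.sum_prod_type]
    exact Finset.sum_congr rfl fun s _ => Finset.sum_congr rfl fun q _ => by rw [e3]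
  have hB : entH μ (fun ω => (X ω, Q ω)) =
      -∑ x, ∑ s, ∑ q, p3 x s q * Real.logb 2 (pXQ x q) := by
    rw [entH_fintype]
    congr 1
    rw [Fintype.sum_prod_type]
    refine Finset.sum_congr rfl fun x _ => ?_
    rw [Finset.sum_comm]
    refine Finset.sum_congr rfl fun q _ => ?_
    rw [eXQ, mXQ, Finset.sum_mul]
  have hC : entH μ (fun ω => (S ω, Q ω)) =
      -∑ x, ∑ s, ∑ q, p3 x s q * Real.logb 2 (pSQ s q) := by
    rw [entH_fintype]
    congr 1
    rw [Fintype.sum_prod_type]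
    conv_rhs => rw [Finset.sum_comm]
    refine Finset.sum_congr rfl fun s _ => ?_
    conv_rhs => rw [Finset.sum_comm]
    refine Finset.sum_congr rfl fun q _ => ?_
    rw [eSQ, mSQ, Finset.sum_mul]
  have hD : entH μ Q = -∑ x, ∑ s, ∑ q, p3 x s q * Real.logb 2 (pQ q) := by
    rw [entH_fintype]
    congr 1
    have step : ∀ x : α, ∑ s, ∑ q, p3 x s q * Real.logb 2 (pQ q)
        = ∑ q, (∑ s, p3 x s q) * Real.logb 2 (pQ q) := by
      intro x
      rw [Finset.sum_comm]
      exact Finset.sum_congr rfl fun q _ => (Finset.sum_mul _ _ _).symm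
    calc ∑ q, prX μ Q q * Real.logb 2 (prX μ Q q)
        = ∑ q, ∑ x, (∑ s, p3 x s q) * Real.logb 2 (pQ q) := by
          refine Finset.sum_congr rfl fun q _ => ?_
          rw [eQ, mQ, Finset.sum_mul]
      _ = ∑ x, ∑ q, (∑ s, p3 x s q) * Real.logb 2 (pQ q) := by rw [Finset.sum_comm]
      _ = ∑ x, ∑ s, ∑ q, p3 x s q * Real.logb 2 (pQ q) := by
          exact Finset.sum_congr rfl fun x _ => (step x).symm
  -- pointwise key identity
  have key : ∀ x s q, p3 x s q * Real.logb 2 (p3 x s q) =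
      p3 x s q * Real.logb 2 (pXQ x q) + p3 x s q * Real.logb 2 (pSQ s q)
        - p3 x s q * Real.logb 2 (pQ q) := by
    intro x s q
    by_cases h0 : p3 x s q = 0
    · simp [h0]
    have hpos : 0 < p3 x s q := lt_of_le_of_ne (prE_nonneg μ _) (Ne.symm h0)
    have hq : 0 < pQ q := lt_of_lt_of_le hpos (prE_mono μ fun ω hω => hω.2.2)
    have hfac : p3 x s q / pQ q = (pXQ x q / pQ q) * (pSQ s q / pQ q) := h x s q hq
    have hp3eq : p3 x s q = pXQ x q * pSQ s q / pQ q := by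
      have h1 : p3 x s q = (p3 x s q / pQ q) * pQ q :=
        (div_mul_cancel₀ _ (ne_of_gt hq)).symm
      rw [h1, hfac]
      field_simp
    have hXQpos : 0 < pXQ x q :=
      lt_of_lt_of_le hpos (prE_mono μ fun ω hω => ⟨hω.1, hω.2.2⟩)
    have hSQpos : 0 < pSQ s q :=
      lt_of_lt_of_le hpos (prE_mono μ fun ω hω => ⟨hω.2.1, hω.2.2⟩)
    rw [hp3eq, Real.logb_div (by positivity) (ne_of_gt hq),
      Real.logb_mul (ne_of_gt hXQpos) (ne_of_gt hSQpos)]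
    ring
  -- combine
  have hsum : ∑ x, ∑ s, ∑ q, p3 x s q * Real.logb 2 (p3 x s q)
      = (∑ x, ∑ s, ∑ q, p3 x s q * Real.logb 2 (pXQ x q))
        + (∑ x, ∑ s, ∑ q, p3 x s q * Real.logb 2 (pSQ s q))
        - (∑ x, ∑ s, ∑ q, p3 x s q * Real.logb 2 (pQ q)) := by
    rw [← Finset.sum_add_distrib, ← Finset.sum_sub_distrib]
    refine Finset.sum_congr rfl fun x _ => ?_
    rw [← Finset.sum_add_distrib, ← Finset.sum_sub_distrib]
    refine Finset.sum_congr rfl fun s _ => ?_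
    rw [← Finset.sum_add_distrib, ← Finset.sum_sub_distrib]
    exact Finset.sum_congr rfl fun q _ => key x s q
  rw [hA, hB, hC, hD]
  linarith [hsum]

/-- `I(X;Y|Q) = H(Y|Q) − H(S|Q)` where `Y = f(g(X), S)`. -/
theorem condMI_eq_condH_sub
    {Ω 𝒬 𝒳 𝒳' 𝒮 𝒴 : Type} [Fintype 𝒬] [Nonempty 𝒬] [Fintype 𝒳] [Nonempty 𝒳]
    [Fintype 𝒳'] [Nonempty 𝒳'] [Fintype 𝒮] [Nonempty 𝒮] [Fintype 𝒴] [Nonempty 𝒴]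
    (μ : FinPMF Ω) (Q : Ω → 𝒬) (X : Ω → 𝒳) (S : Ω → 𝒮)
    (g : 𝒳 → 𝒳') (f : 𝒳' → 𝒮 → 𝒴)
    (hindep : CondIndepFun μ X S Q)
    (hf : OneToOne f) :
    condMI μ X (fun ω => f (g (X ω)) (S ω)) Q =
      condH μ (fun ω => f (g (X ω)) (S ω)) Q - condH μ S Q := by
  classical
  have hφ : Function.Injective
      (fun p : 𝒳 × 𝒮 × 𝒬 => ((p.1, f (g p.1) p.2.1), p.2.2)) := by
    rintro ⟨x, s, q⟩ ⟨x', s', q'⟩ hp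
    simp only [Prod.mk.injEq] at hp
    obtain ⟨⟨hx, hfs⟩, hq⟩ := hp
    subst hx
    exact by simp [hf.2 (g x) hfs, hq]
  have h1 : entH μ (fun ω => ((X ω, f (g (X ω)) (S ω)), Q ω))
      = entH μ (fun ω => (X ω, S ω, Q ω)) :=
    entH_comp μ (fun ω => (X ω, S ω, Q ω))
      (fun p : 𝒳 × 𝒮 × 𝒬 => ((p.1, f (g p.1) p.2.1), p.2.2)) hφ
  have hadd := entH_add_of_condIndep μ X S Q hindep
  simp only [condMI, condH]
  rw [h1]
  linarith [hadd]
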